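/- Let z = p ∧ q be the majorization meet of sorted probability vectors p and q, and let i_0 = n+1 > i_1 > ... > i_k = 1 be the inversion points of p and q. Then for every odd s ∈ {1,...,k} and every index i with i_s ≤ i ≤ i_{s-1} − 2, one has z_i = p_i; and for every even s and i_s ≤ i ≤ i_{s-1} − 2, one has z_i = q_i. -/

import Mathlib

open Finset

/-- Majorization via prefix sums (vectors as functions ℕ → ℝ, padded with zeros). -/
def Maj (p q : ℕ → ℝ) : Prop :=
  ∀ i : ℕ, ∑ k ∈ Finset.range i, p k ≤ ∑ k ∈ Finset.range i, q k

/-- A probability vector of length `n`, sorted non-increasingly, zero beyond `n`. -/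
def IsProbVec (n : ℕ) (p : ℕ → ℝ) : Prop :=
  (∀ i, 0 ≤ p i) ∧ (∀ i j : ℕ, i ≤ j → p j ≤ p i) ∧
  (∑ k ∈ Finset.range n, p k = 1) ∧ (∀ i, n ≤ i → p i = 0)

/-- The greatest lower bound `p ∧ q` in the majorization lattice. -/
noncomputable def meet (p q : ℕ → ℝ) : ℕ → ℝ := fun i =>
  min (∑ k ∈ Finset.range (i + 1), p k) (∑ k ∈ Finset.range (i + 1), q k) -
  min (∑ k ∈ Finset.range i, p k) (∑ k ∈ Finset.range i, q k)

/-- Shannon entropy (base 2) of the first `n` components. -/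
noncomputable def H2 (n : ℕ) (p : ℕ → ℝ) : ℝ :=
  ∑ k ∈ Finset.range n, -(p k * Real.logb 2 (p k))

/-- Shannon entropy (base 2) of the entries of an `n × m` matrix. -/
noncomputable def Hmat (n m : ℕ) (M : ℕ → ℕ → ℝ) : ℝ :=
  ∑ i ∈ Finset.range n, ∑ j ∈ Finset.range m, -(M i j * Real.logb 2 (M i j))

/-- `M` is a coupling of `p` and `q`: nonnegative, row sums `p`, column sums `q`. -/
def IsCoupling (n m : ℕ) (p q : ℕ → ℝ) (M : ℕ → ℕ → ℝ) : Prop :=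
  (∀ i j, 0 ≤ M i j) ∧ (∀ i < n, ∑ j ∈ Finset.range m, M i j = p i) ∧
  (∀ j < m, ∑ i ∈ Finset.range n, M i j = q j)

/-- The `half` operator: duplicates and halves each component. -/
noncomputable def half (p : ℕ → ℝ) : ℕ → ℝ := fun i => p (i / 2) / 2

/-- Iterated `half` operator. -/
noncomputable def halfIter : ℕ → (ℕ → ℝ) → (ℕ → ℝ)
  | 0, p => p
  | (i + 1), p => half (halfIter i p)

/-- Iterated majorization meet of `p 0, p 1, …, p k`. -/
noncomputable def bigMeet (p : ℕ → ℕ → ℝ) : ℕ → (ℕ → ℝ)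
  | 0 => p 0
  | (k + 1) => meet (bigMeet p k) (p (k + 1))

/-!
With equal totals `1`, a tail sum `∑_{j ≥ i} p_j` dominates that of `q` exactly when the prefix sum
`∑_{j < i} p_j` is dominated by that of `q`. Since `(p ∧ q)_i` is the increment of
`min (∑_{j < ·} p_j) (∑_{j < ·} q_j)` from `i` to `i + 1`, at every index `i` for which both `i`
and `i + 1` lie in one block between consecutive inversion points the minimum is attained by the
same vector at both ends, and the increment is that vector's entry.
-/

section PrefixSuffix

variable {M : Type*} [AddCommGroup M]

theorem sum_range_add_sum_Ico_of_eq_zero {n : ℕ} {p : ℕ → M} (hp : ∀ i, n ≤ i → p i = 0)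
    (j : ℕ) : ∑ k ∈ range j, p k + ∑ k ∈ Ico j n, p k = ∑ k ∈ range n, p k := by
  rcases le_total j n with hjn | hnj
  · exact sum_range_add_sum_Ico p hjn
  · rw [Ico_eq_empty_of_le hnj, sum_empty, add_zero, eventually_constant_sum hp hnj]

theorem sum_range_le_sum_range_iff_sum_Ico_le [PartialOrder M] [IsOrderedAddMonoid M] {n : ℕ}
    {p q : ℕ → M} (hp : ∀ i, n ≤ i → p i = 0) (hq : ∀ i, n ≤ i → q i = 0)
    (htot : ∑ k ∈ range n, p k = ∑ k ∈ range n, q k) (j : ℕ) :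
    ∑ k ∈ range j, p k ≤ ∑ k ∈ range j, q k ↔ ∑ k ∈ Ico j n, q k ≤ ∑ k ∈ Ico j n, p k := by
  rw [eq_sub_of_add_eq (sum_range_add_sum_Ico_of_eq_zero hp j),
    eq_sub_of_add_eq (sum_range_add_sum_Ico_of_eq_zero hq j), htot, sub_le_sub_iff_left]

end PrefixSuffix

theorem IsProbVec.sum_range_le_sum_range_iff {n : ℕ} {p q : ℕ → ℝ}
    (hp : IsProbVec n p) (hq : IsProbVec n q) (j : ℕ) :
    ∑ k ∈ range j, p k ≤ ∑ k ∈ range j, q k ↔ ∑ k ∈ Ico j n, q k ≤ ∑ k ∈ Ico j n, p k :=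
  sum_range_le_sum_range_iff_sum_Ico_le hp.2.2.2 hq.2.2.2 (hp.2.2.1.trans hq.2.2.1.symm) j

theorem meet_eq_left {p q : ℕ → ℝ} {i : ℕ} (hi : ∑ k ∈ range i, p k ≤ ∑ k ∈ range i, q k)
    (hi' : ∑ k ∈ range (i + 1), p k ≤ ∑ k ∈ range (i + 1), q k) : meet p q i = p i := by
  rw [meet, min_eq_left hi, min_eq_left hi', sum_range_succ, add_sub_cancel_left]

theorem meet_comm (p q : ℕ → ℝ) : meet p q = meet q p := by
  ext i
  simp only [meet, min_comm]

theorem meet_eq_right {p q : ℕ → ℝ} {i : ℕ} (hi : ∑ k ∈ range i, q k ≤ ∑ k ∈ range i, p k)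
    (hi' : ∑ k ∈ range (i + 1), q k ≤ ∑ k ∈ range (i + 1), p k) : meet p q i = q i := by
  rw [meet_comm, meet_eq_left hi hi']

theorem stmt19_general (n : ℕ) (p q : ℕ → ℝ) (hp : IsProbVec n p) (hq : IsProbVec n q)
    (k : ℕ) (idx : ℕ → ℕ)
    (hodd : ∀ s, 1 ≤ s → s ≤ k → Odd s → ∀ i, idx s ≤ i → i < idx (s - 1) →
      ∑ j ∈ Finset.Ico i n, q j ≤ ∑ j ∈ Finset.Ico i n, p j)
    (heven : ∀ s, 1 ≤ s → s ≤ k → Even s → ∀ i, idx s ≤ i → i < idx (s - 1) →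
      ∑ j ∈ Finset.Ico i n, p j ≤ ∑ j ∈ Finset.Ico i n, q j) :
    ∀ s, 1 ≤ s → s ≤ k → ∀ i, idx s ≤ i → i + 2 ≤ idx (s - 1) →
      (Odd s → meet p q i = p i) ∧ (Even s → meet p q i = q i) := by
  intro s hs hsk i hi hi2
  refine ⟨fun hs_odd => ?_, fun hs_even => ?_⟩
  · have hle := fun j hj hj' => (hp.sum_range_le_sum_range_iff hq j).2
      (hodd s hs hsk hs_odd j hj hj')
    exact meet_eq_left (hle i hi (by omega)) (hle (i + 1) (by omega) hi2)
  · have hle := fun j hj hj' => (hq.sum_range_le_sum_range_iff hp j).2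
      (heven s hs hsk hs_even j hj hj')
    exact meet_eq_right (hle i hi (by omega)) (hle (i + 1) (by omega) hi2)

theorem stmt19 (n : ℕ) (p q : ℕ → ℝ) (hp : IsProbVec n p) (hq : IsProbVec n q)
    (k : ℕ) (idx : ℕ → ℕ) (h0 : idx 0 = n) (hk : idx k = 0)
    (hdec : ∀ s < k, idx (s + 1) < idx s)
    (hodd : ∀ s, 1 ≤ s → s ≤ k → Odd s → ∀ i, idx s ≤ i → i < idx (s - 1) →
      ∑ j ∈ Finset.Ico i n, q j ≤ ∑ j ∈ Finset.Ico i n, p j)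
    (heven : ∀ s, 1 ≤ s → s ≤ k → Even s → ∀ i, idx s ≤ i → i < idx (s - 1) →
      ∑ j ∈ Finset.Ico i n, p j ≤ ∑ j ∈ Finset.Ico i n, q j) :
    ∀ s, 1 ≤ s → s ≤ k → ∀ i, idx s ≤ i → i + 2 ≤ idx (s - 1) →
      (Odd s → meet p q i = p i) ∧ (Even s → meet p q i = q i) :=
  stmt19_general n p q hp hq k idx hodd heven
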